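/- arXiv:1301.0215 — 2 statements merged into one kernel-verified Lean document; each statement's English description precedes it below -/
import Mathlib

section
/- With the functional $J^T$ as above, the unique minimizer of $J^T$ over $L^2(\Omega)$ is nonzero if and only if $\|y(T;y_0)\|_{L^2(\Omega)} > K$, where $y(\cdot;y_0)$ is the free (uncontrolled) solution of $y_t - \Delta y - ay = 0$ with $y(0)=y_0$ and Dirichlet boundary conditions. -/
open Set Filter MeasureTheory intervalIntegral
open scoped RealInnerProductSpace Topology

/-- With `J^T` as in Statement 3 and `yT = y(T;y₀)` the free
(uncontrolled) solution of `y_t - Δy - ay = 0`, `y(0) = y₀` — characterized by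
the duality identity `⟪yT, φ_T⟫ = ⟪y₀, Φ 0 φ_T⟫` — the unique minimizer
`φ̂_T` of `J^T` is nonzero if and only if `‖yT‖ > K`. -/
theorem stmt4 {H : Type*} [NormedAddCommGroup H] [InnerProductSpace ℝ H] [CompleteSpace H]
    (T K : ℝ) (hT : 0 < T) (hK : 0 < K)
    (Phi : ℝ → H →L[ℝ] H) (R : H →L[ℝ] H) (y0 yT : H) (J : H → ℝ)
    (hcont : ∀ x : H, ContinuousOn (fun t => Phi t x) (Icc 0 T))
    (hUC : ∀ x : H, (∫ t in (0:ℝ)..T, ‖R (Phi t x)‖) = 0 → x = 0)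
    (hJ : ∀ x : H, J x =
      (1/2) * (∫ t in (0:ℝ)..T, ‖R (Phi t x)‖) ^ 2 + ⟪y0, Phi 0 x⟫ + K * ‖x‖)
    (hdual : ∀ x : H, ⟪yT, x⟫ = ⟪y0, Phi 0 x⟫)
    (phihat : H) (hmin : IsMinOn J Set.univ phihat)
    (huniq : ∀ x : H, IsMinOn J Set.univ x → x = phihat) :
    phihat ≠ 0 ↔ K < ‖yT‖ := by
  have hJ' : ∀ x : H, J x =
      (1/2) * (∫ t in (0:ℝ)..T, ‖R (Phi t x)‖) ^ 2 + ⟪yT, x⟫ + K * ‖x‖ := by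
    intro x; rw [hJ x, hdual x]
  have hJ0 : J 0 = 0 := by
    have : (∫ t in (0:ℝ)..T, ‖R (Phi t (0 : H))‖) = 0 := by
      simp
    rw [hJ' 0, this]; simp
  constructor
  · -- phihat ≠ 0 → K < ‖yT‖
    intro hne
    by_contra hle
    push_neg at hle
    -- then 0 is a minimizer
    have h0min : IsMinOn J Set.univ 0 := by
      intro x _
      have h1 : (0:ℝ) ≤ (1/2) * (∫ t in (0:ℝ)..T, ‖R (Phi t x)‖) ^ 2 := by positivity
      have h2 : -(‖yT‖ * ‖x‖) ≤ ⟪yT, x⟫ := by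
        have := abs_real_inner_le_norm yT x
        have := neg_abs_le (⟪yT, x⟫ : ℝ)
        linarith
      have h3 : ‖yT‖ * ‖x‖ ≤ K * ‖x‖ :=
        mul_le_mul_of_nonneg_right hle (norm_nonneg x)
      simp only [Set.mem_setOf_eq, hJ0]
      rw [hJ' x]
      linarith
    exact hne ((huniq 0 h0min).symm)
  · -- K < ‖yT‖ → phihat ≠ 0
    intro hKy
    intro h0
    subst h0
    have hyT : yT ≠ 0 := by
      intro h; rw [h, norm_zero] at hKy; linarith
    set c : ℝ := ∫ t in (0:ℝ)..T, ‖R (Phi t yT)‖ with hc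
    have hcpos : 0 < c := by
      rcases lt_or_eq_of_le (intervalIntegral.integral_nonneg (by positivity : (0:ℝ) ≤ T)
        (fun t _ => norm_nonneg (R (Phi t yT)))) with h | h
      · exact h
      · exact absurd (hUC yT h.symm) hyT
    set ε : ℝ := ‖yT‖ * (‖yT‖ - K) with hε
    have hεpos : 0 < ε := mul_pos (by linarith) (by linarith)
    set s : ℝ := ε / c ^ 2 with hs
    have hspos : 0 < s := div_pos hεpos (by positivity)
    have hscale : (∫ t in (0:ℝ)..T, ‖R (Phi t ((-s) • yT))‖) = s * c := by
      have : ∀ t, ‖R (Phi t ((-s) • yT))‖ = s * ‖R (Phi t yT)‖ := by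
        intro t
        rw [(Phi t).map_smul, R.map_smul, norm_smul]
        simp [abs_of_pos hspos]
      simp_rw [this]
      rw [intervalIntegral.integral_const_mul]
    have hJs : J ((-s) • yT) = (1/2) * (s * c) ^ 2 - s * ε := by
      rw [hJ' _, hscale, real_inner_smul_right, real_inner_self_eq_norm_sq,
        norm_smul]
      simp only [norm_neg, Real.norm_eq_abs, abs_of_pos hspos, hε]
      ring
    have hneg : J ((-s) • yT) < 0 := by
      rw [hJs, hs]
      have : (1/2) * (ε / c ^ 2 * c) ^ 2 - ε / c ^ 2 * ε = -(ε ^ 2 / (2 * c ^ 2)) := by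
        field_simp; ring
      rw [this]
      have h4 : 0 < ε ^ 2 / (2 * c ^ 2) := by positivity
      linarith
    have := hmin (Set.mem_univ ((-s) • yT))
    rw [hJ0] at this
    exact absurd this (not_le.mpr hneg)
end

section
/- (Convergence of optimal times) Let $T^*$ and $T^{*,1}_\varepsilon$ be the optimal times of the time optimal control problems $(TP)$ and $(TP^\varepsilon_1)$ for the heat equations with potentials $a$ and $a_\varepsilon$ respectively, with control bound $M$, target $\overline{B_K(0)}$ in $L^2(\Omega)$, and initial datum $y_0 \notin \overline{B_K(0)}$. Assume $\|a_\varepsilon - a\|_{L^\infty(\Omega)} \to 0$ and the decay condition $\|a\|_{L^\infty} < \lambda_1$ or $a \le 0$. Then $T^{*,1}_\varepsilon \to T^*$ as $\varepsilon \to 0^+$. -/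
/-!
Both optimal times are infima of the sets of times at which an admissible control steers the
mild solution into the ball. The Duhamel formula and a Gronwall-type argument give
`‖S^ε(τ) - S(τ)‖ ≤ κ_ε` on a fixed time interval, with `κ_ε → 0`. Suppose a control steers one
system into the ball at time `t`. Sampling it at well-chosen tags gives a piecewise constant
control with almost the same effect on the other system (sampling is needed because admissible
controls need not be measurable). Switching the control off for a further time `h` then
contracts the state by the factor `‖S(h)‖ < 1`, and this absorbs all the errors. Hence
`t + h` is admissible for the other system, and the two optimal times differ by at most `h`.
-/

open Set Filter MeasureTheory intervalIntegral
open scoped Topology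

structure IsContractionSemigroup {E : Type*} [NormedAddCommGroup E] [NormedSpace ℝ E]
    (S : ℝ → E →L[ℝ] E) : Prop where
  zero_eq_id : S 0 = ContinuousLinearMap.id ℝ E
  add_eq_comp : ∀ s t : ℝ, 0 ≤ s → 0 ≤ t → S (s + t) = (S s).comp (S t)
  continuous_apply : ∀ x : E, Continuous fun t => S t x
  norm_le_one : ∀ t : ℝ, 0 ≤ t → ‖S t‖ ≤ 1

namespace IsContractionSemigroup

variable {E : Type*} [NormedAddCommGroup E] [NormedSpace ℝ E] {S : ℝ → E →L[ℝ] E}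

theorem norm_apply_le (hS : IsContractionSemigroup S) {t : ℝ} (ht : 0 ≤ t) (x : E) :
    ‖S t x‖ ≤ ‖x‖ :=
  ((S t).le_opNorm x).trans (mul_le_of_le_one_left (norm_nonneg x) (hS.norm_le_one t ht))

theorem apply_add (hS : IsContractionSemigroup S) {s t : ℝ} (hs : 0 ≤ s) (ht : 0 ≤ t) (x : E) :
    S (s + t) x = S s (S t x) := by
  rw [hS.add_eq_comp s t hs ht, ContinuousLinearMap.comp_apply]

theorem continuousOn_uncurry (hS : IsContractionSemigroup S) :
    ContinuousOn (fun p : ℝ × E => S p.1 p.2) (Ici 0 ×ˢ univ) := by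
  rintro ⟨τ₀, x₀⟩ -
  rw [ContinuousWithinAt, tendsto_iff_norm_sub_tendsto_zero]
  have hbound : ∀ p ∈ Ici (0 : ℝ) ×ˢ (univ : Set E),
      ‖S p.1 p.2 - S τ₀ x₀‖ ≤ ‖p.2 - x₀‖ + ‖S p.1 x₀ - S τ₀ x₀‖ := fun p hp => by
    calc ‖S p.1 p.2 - S τ₀ x₀‖ = ‖S p.1 (p.2 - x₀) + (S p.1 x₀ - S τ₀ x₀)‖ := by
          rw [map_sub]; abel_nf
      _ ≤ ‖p.2 - x₀‖ + ‖S p.1 x₀ - S τ₀ x₀‖ :=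
          (norm_add_le _ _).trans (by gcongr; exact hS.norm_apply_le hp.1 _)
  refine squeeze_zero' (Eventually.of_forall fun _ => norm_nonneg _)
    (eventually_nhdsWithin_of_forall hbound) (tendsto_nhdsWithin_of_tendsto_nhds ?_)
  have hcont : Continuous fun p : ℝ × E => ‖p.2 - x₀‖ + ‖S p.1 x₀ - S τ₀ x₀‖ := by
    have := hS.continuous_apply x₀
    fun_prop
  simpa using hcont.tendsto (τ₀, x₀)

theorem exists_norm_apply_sub_lt (hS : IsContractionSemigroup S) {φ : ℝ → E}
    (hφ : Continuous φ) (T : ℝ) {δ : ℝ} (hδ : 0 < δ) :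
    ∃ m > 0, ∀ r ∈ Icc 0 T, ∀ s ∈ Icc 0 T, s ≤ r → r - s < m →
      ‖S (r - s) (φ r) - φ s‖ < δ := by
  have hψ : ContinuousOn (fun p : ℝ × ℝ => S p.1 (φ p.2)) (Icc 0 T ×ˢ Icc 0 T) :=
    hS.continuousOn_uncurry.comp (continuous_fst.prodMk (hφ.comp continuous_snd)).continuousOn
      fun p hp => ⟨hp.1.1, mem_univ _⟩
  obtain ⟨m, hm, hmψ⟩ := Metric.uniformContinuousOn_iff.mp
    ((isCompact_Icc.prod isCompact_Icc).uniformContinuousOn_of_continuous hψ) δ hδ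
  refine ⟨m, hm, fun r hr s hs hsr hrs => ?_⟩
  have hdist : dist (r - s, r) ((0 : ℝ), s) < m := by
    rw [Prod.dist_eq, Real.dist_eq, Real.dist_eq, sub_zero, abs_of_nonneg (sub_nonneg.2 hsr),
      max_self]
    exact hrs
  have := hmψ (r - s, r) ⟨⟨sub_nonneg.2 hsr, by linarith [hs.1, hr.2]⟩, hr⟩ (0, s)
    ⟨⟨le_rfl, by linarith [hs.1, hr.2]⟩, hs⟩ hdist
  simpa [hS.zero_eq_id, dist_eq_norm] using this

theorem norm_apply_sub_le_of_le (hS : IsContractionSemigroup S) {t τ s β δ : ℝ} {x : E}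
    {G φ : ℝ → E} (hsτ : s ≤ τ) (hτt : τ ≤ t) (hx : ‖S (t - τ) x - G τ‖ ≤ β)
    (hφ : ‖S (τ - s) (φ τ) - φ s‖ ≤ δ) :
    ‖S (t - s) x - G s‖ ≤ β + ‖G τ - φ τ‖ + δ + ‖G s - φ s‖ := by
  have hτs := sub_nonneg.2 hsτ
  have hsplit : S (t - s) x = S (τ - s) (S (t - τ) x) := by
    rw [← hS.apply_add hτs (sub_nonneg.2 hτt)]
    ring_nf
  calc ‖S (t - s) x - G s‖
      = ‖S (τ - s) (S (t - τ) x - G τ) + S (τ - s) (G τ - φ τ) + (S (τ - s) (φ τ) - φ s)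
          - (G s - φ s)‖ := by rw [hsplit, map_sub, map_sub]; abel_nf
    _ ≤ ‖S (τ - s) (S (t - τ) x - G τ)‖ + ‖S (τ - s) (G τ - φ τ)‖ + ‖S (τ - s) (φ τ) - φ s‖
          + ‖G s - φ s‖ := (norm_sub_le _ _).trans (by gcongr; exact norm_add₃_le)
    _ ≤ β + ‖G τ - φ τ‖ + δ + ‖G s - φ s‖ := by
        gcongr
        · exact (hS.norm_apply_le hτs _).trans hx
        · exact hS.norm_apply_le hτs _

end IsContractionSemigroup

theorem norm_sub_le_of_duhamel {E : Type*} [NormedAddCommGroup E] [NormedSpace ℝ E]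
    {S Q : ℝ → E →L[ℝ] E} {D : E →L[ℝ] E} {T : ℝ} (hS : ∀ τ, 0 ≤ τ → ‖S τ‖ ≤ 1)
    (hQ : ∀ x, Continuous fun τ => Q τ x)
    (hduh : ∀ τ, 0 ≤ τ → ∀ x, Q τ x = S τ x + ∫ σ in 0..τ, S (τ - σ) (D (Q σ x)))
    (hDT : ‖D‖ * T ≤ 1 / 2) {τ : ℝ} (hτ : τ ∈ Icc 0 T) (x : E) :
    ‖Q τ x - S τ x‖ ≤ 2 * ‖D‖ * T * ‖x‖ := by
  have hSx : ∀ σ, 0 ≤ σ → ∀ y, ‖S σ y‖ ≤ ‖y‖ := fun σ hσ y =>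
    ((S σ).le_of_opNorm_le (hS σ hσ) y).trans_eq (one_mul _)
  obtain ⟨z, hz, hmax⟩ := isCompact_Icc.exists_isMaxOn (nonempty_Icc.2 (hτ.1.trans hτ.2))
    (continuous_norm.comp (hQ x)).continuousOn
  set m := ‖Q z x‖
  have hduhamel : ∀ σ ∈ Icc 0 T, ‖∫ ρ in 0..σ, S (σ - ρ) (D (Q ρ x))‖ ≤ ‖D‖ * m * T := by
    intro σ hσ
    have hpt : ∀ ρ ∈ uIoc 0 σ, ‖S (σ - ρ) (D (Q ρ x))‖ ≤ ‖D‖ * m := fun ρ hρ => by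
      rw [uIoc_of_le hσ.1] at hρ
      calc ‖S (σ - ρ) (D (Q ρ x))‖ ≤ ‖D (Q ρ x)‖ := hSx _ (by linarith [hρ.2]) _
        _ ≤ ‖D‖ * ‖Q ρ x‖ := D.le_opNorm _
        _ ≤ ‖D‖ * m := by gcongr; exact hmax ⟨hρ.1.le, hρ.2.trans hσ.2⟩
    calc _ ≤ ‖D‖ * m * |σ - 0| := norm_integral_le_of_norm_le_const hpt
      _ ≤ ‖D‖ * m * T := by rw [sub_zero, abs_of_nonneg hσ.1]; gcongr; exact hσ.2
  have hm : m ≤ 2 * ‖x‖ := by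
    have : m ≤ ‖x‖ + ‖D‖ * m * T :=
      calc m = ‖S z x + ∫ ρ in 0..z, S (z - ρ) (D (Q ρ x))‖ := by rw [← hduh z hz.1 x]
        _ ≤ ‖x‖ + ‖D‖ * m * T :=
            (norm_add_le _ _).trans (add_le_add (hSx z hz.1 x) (hduhamel z hz))
    nlinarith [norm_nonneg (Q z x)]
  calc ‖Q τ x - S τ x‖ = ‖∫ σ in 0..τ, S (τ - σ) (D (Q σ x))‖ := by
        rw [hduh τ hτ.1 x, add_sub_cancel_left]
    _ ≤ ‖D‖ * m * T := hduhamel τ hτ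
    _ ≤ ‖D‖ * (2 * ‖x‖) * T := by gcongr; exact hτ.1.trans hτ.2
    _ = 2 * ‖D‖ * T * ‖x‖ := by ring

theorem csInf_le_csInf_add {A B : Set ℝ} {a h : ℝ} (hA : A.Nonempty) (hB : BddBelow B)
    (ha : sInf A < a) (hAB : ∀ t ∈ A, t < a → t + h ∈ B) : sInf B ≤ sInf A + h := by
  refine le_of_forall_pos_lt_add fun η hη => ?_
  obtain ⟨t, htA, hta⟩ := exists_lt_of_csInf_lt hA (lt_min ha (lt_add_of_pos_right _ hη))
  calc sInf B ≤ t + h := csInf_le hB (hAB t htA (hta.trans_le (min_le_left _ _)))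
    _ < sInf A + h + η := by linarith [min_le_right a (sInf A + η)]

theorem exists_mul_le_intervalIntegral {f : ℝ → ℝ} {a b : ℝ} (hab : a < b)
    (hf : IntervalIntegrable f volume a b) :
    ∃ τ ∈ Ioc a b, (b - a) * f τ ≤ ∫ s in a..b, f s := by
  have hvol : volume (Ioc a b) = ENNReal.ofReal (b - a) := Real.volume_Ioc
  obtain ⟨τ, hτ, hτf⟩ := exists_le_setAverage (by simp [hvol, hab]) (by simp [hvol])
    ((intervalIntegrable_iff_integrableOn_Ioc_of_le hab.le).mp hf)
  refine ⟨τ, hτ, ?_⟩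
  rw [setAverage_eq, measureReal_def, hvol, ENNReal.toReal_ofReal (sub_nonneg.2 hab.le),
    smul_eq_mul, ← integral_of_le hab.le] at hτf
  rwa [le_inv_mul_iff₀ (sub_pos.2 hab)] at hτf

theorem exists_continuous_intervalIntegral_norm_sub_le {E : Type*} [NormedAddCommGroup E]
    [NormedSpace ℝ E] {G : ℝ → E} {a b δ : ℝ} (hab : a ≤ b)
    (hG : IntervalIntegrable G volume a b) (hδ : 0 < δ) :
    ∃ φ : ℝ → E, Continuous φ ∧ ∫ s in a..b, ‖G s - φ s‖ ≤ δ := by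
  have hGi : Integrable ((Ioc a b).indicator G) :=
    (integrable_indicator_iff measurableSet_Ioc).mpr hG.1
  obtain ⟨φ, -, hφδ, hφ, hφi⟩ := hGi.exists_hasCompactSupport_integral_sub_le hδ
  refine ⟨φ, hφ, le_trans ?_ hφδ⟩
  rw [integral_of_le hab]
  calc ∫ s in Ioc a b, ‖G s - φ s‖
      = ∫ s in Ioc a b, ‖(Ioc a b).indicator G s - φ s‖ :=
        setIntegral_congr_fun measurableSet_Ioc fun s hs => by rw [indicator_of_mem hs]
    _ ≤ ∫ s, ‖(Ioc a b).indicator G s - φ s‖ :=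
        setIntegral_le_integral (hGi.sub hφi).norm (Eventually.of_forall fun _ => norm_nonneg _)

section UniformPartition

variable {E : Type*} [NormedAddCommGroup E] {ℓ : ℝ} {n : ℕ}

theorem intervalIntegrable_piece {f : ℝ → E} (hℓ : 0 ≤ ℓ)
    (hf : IntervalIntegrable f volume 0 ((n + 1) * ℓ)) {j : ℕ} (hj : j ≤ n) :
    IntervalIntegrable f volume (j * ℓ) ((j + 1) * ℓ) :=
  hf.mono_set <| by
    rw [uIcc_of_le (by gcongr; linarith), uIcc_of_le (by positivity)]
    exact Icc_subset_Icc (by positivity) (by gcongr)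

theorem integral_eq_sum_pieces [NormedSpace ℝ E] {f : ℝ → E} (hℓ : 0 ≤ ℓ)
    (hf : IntervalIntegrable f volume 0 ((n + 1) * ℓ)) :
    ∫ s in 0..(n + 1) * ℓ, f s = ∑ j ∈ Finset.range (n + 1), ∫ s in j * ℓ..(j + 1) * ℓ, f s := by
  have := sum_integral_adjacent_intervals (a := fun j : ℕ => (j : ℝ) * ℓ) fun j hj => by
    simpa using intervalIntegrable_piece hℓ hf (Nat.lt_succ_iff.mp hj)
  simpa using this.symm

theorem exists_mul_le_integral_next_piece {f : ℝ → ℝ} (hℓ : 0 < ℓ)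
    (hf : IntervalIntegrable f volume 0 ((n + 1) * ℓ)) {j : ℕ} (hj : j < n) :
    ∃ τ ∈ Ioc ((j + 1) * ℓ) ((j + 2) * ℓ), ℓ * f τ ≤ ∫ s in (j + 1) * ℓ..(j + 2) * ℓ, f s := by
  have hfj : IntervalIntegrable f volume ((j + 1) * ℓ) ((j + 2) * ℓ) := by
    have := intervalIntegrable_piece hℓ.le hf (Nat.succ_le_of_lt hj)
    push_cast at this
    convert this using 2; ring
  simpa [show ((j : ℝ) + 2) * ℓ - (j + 1) * ℓ = ℓ by ring] using
    exists_mul_le_intervalIntegral (by gcongr; linarith) hfj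

/-- Each piece of `f` is charged twice: directly, and through `e` of the preceding piece. -/
theorem intervalIntegral_le_of_partition {g f : ℝ → ℝ} {e : ℕ → ℝ} {c d T : ℝ}
    (hℓ : 0 < ℓ) (hT : T = (n + 1) * ℓ) (hg : IntervalIntegrable g volume 0 T)
    (hf : IntervalIntegrable f volume 0 T) (hf0 : ∀ s, 0 ≤ f s)
    (hpiece : ∀ j < n, ∀ s ∈ Ioo (j * ℓ) ((j + 1) * ℓ), g s ≤ c + e j + f s)
    (he : ∀ j < n, ℓ * e j ≤ ∫ s in (j + 1) * ℓ..(j + 2) * ℓ, f s)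
    (hlast : ∀ s ∈ Ioo (n * ℓ) T, g s ≤ d) :
    ∫ s in 0..T, g s ≤ n * ℓ * c + ℓ * d + 2 * ∫ s in 0..T, f s := by
  subst hT
  set I : ℕ → ℝ := fun j => ∫ s in j * ℓ..(j + 1) * ℓ, f s
  have hI0 : ∀ j, 0 ≤ I j := fun j => integral_nonneg (by gcongr; linarith) fun s _ => hf0 s
  have hg_piece : ∀ j < n, ∫ s in j * ℓ..(j + 1) * ℓ, g s ≤ ℓ * c + I (j + 1) + I j := by
    intro j hj
    have hfj := intervalIntegrable_piece hℓ.le hf hj.le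
    calc ∫ s in j * ℓ..(j + 1) * ℓ, g s ≤ ∫ s in j * ℓ..(j + 1) * ℓ, (c + e j + f s) :=
          integral_mono_on_of_le_Ioo (by gcongr; linarith)
            (intervalIntegrable_piece hℓ.le hg hj.le) (intervalIntegrable_const.add hfj)
            (hpiece j hj)
      _ = ℓ * c + ℓ * e j + I j := by
          rw [integral_add intervalIntegrable_const hfj, intervalIntegral.integral_const,
            smul_eq_mul]
          simp only [I]; ring
      _ ≤ ℓ * c + I (j + 1) + I j := by
          have := he j hj
          simp only [I]; push_cast; ring_nf at this ⊢; linarith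
  have hg_last : ∫ s in n * ℓ..(n + 1) * ℓ, g s ≤ ℓ * d := by
    calc ∫ s in n * ℓ..(n + 1) * ℓ, g s ≤ ∫ s in n * ℓ..(n + 1) * ℓ, d :=
          integral_mono_on_of_le_Ioo (by gcongr; linarith)
            (intervalIntegrable_piece hℓ.le hg le_rfl) intervalIntegrable_const hlast
      _ = ℓ * d := by rw [intervalIntegral.integral_const, smul_eq_mul]; ring
  have hsum : ∑ j ∈ Finset.range n, (ℓ * c + I (j + 1) + I j) ≤
      n * ℓ * c + 2 * ∑ j ∈ Finset.range (n + 1), I j := by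
    rw [Finset.sum_add_distrib, Finset.sum_add_distrib, Finset.sum_const, Finset.card_range,
      nsmul_eq_mul]
    linarith [hI0 0, hI0 n, Finset.sum_range_succ' I n, Finset.sum_range_succ I n]
  rw [integral_eq_sum_pieces hℓ.le hg, integral_eq_sum_pieces hℓ.le hf, Finset.sum_range_succ]
  linarith [Finset.sum_le_sum fun j hj => hg_piece j (Finset.mem_range.mp hj)]

end UniformPartition

def IsStepFun {U : Type*} [AddCommMonoid U] (w : ℝ → U) : Prop :=
  ∃ (n : ℕ) (a b : ℕ → ℝ) (c : ℕ → U),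
    w = fun s => ∑ j ∈ Finset.range n, (Ioc (a j) (b j)).indicator (fun _ => c j) s

theorem IsStepFun.intervalIntegrable_apply {U E : Type*} [NormedAddCommGroup U]
    [NormedSpace ℝ U] [NormedAddCommGroup E] [NormedSpace ℝ E] {w : ℝ → U} (hw : IsStepFun w)
    {Q : ℝ → E →L[ℝ] E} (hQ : ∀ x, Continuous fun τ => Q τ x) (R : U →L[ℝ] E) (t a b : ℝ) :
    IntervalIntegrable (fun s => Q (t - s) (R (w s))) volume a b := by
  obtain ⟨n, a', b', c, rfl⟩ := hw
  have hsum : (fun s => Q (t - s)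
        (R (∑ j ∈ Finset.range n, (Ioc (a' j) (b' j)).indicator (fun _ => c j) s)))
      = ∑ j ∈ Finset.range n, (Ioc (a' j) (b' j)).indicator (fun s => Q (t - s) (R (c j))) := by
    ext s
    simp only [map_sum, Finset.sum_apply]
    refine Finset.sum_congr rfl fun j _ => ?_
    by_cases hs : s ∈ Ioc (a' j) (b' j) <;> simp [hs]
  have hcont : ∀ x, Continuous fun s => Q (t - s) (R x) := fun x =>
    (hQ (R x)).comp (continuous_const.sub continuous_id)
  rw [hsum]
  exact IntervalIntegrable.sum _ fun j _ =>
    ⟨(hcont (c j)).integrableOn_Ioc.indicator measurableSet_Ioc,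
      (hcont (c j)).integrableOn_Ioc.indicator measurableSet_Ioc⟩

theorem sum_indicator_eq_of_mem {α ι U : Type*} [AddCommMonoid U] {P : ι → Set α}
    (hP : Pairwise (Function.onFun Disjoint P)) {I : Finset ι} {c : ι → U} {j : ι} (hj : j ∈ I)
    {s : α} (hs : s ∈ P j) : ∑ i ∈ I, (P i).indicator (fun _ => c i) s = c j := by
  rw [Finset.sum_eq_single_of_mem j hj fun i _ hij =>
    indicator_of_notMem (disjoint_left.mp (hP hij.symm) hs) _, indicator_of_mem hs]

theorem norm_sum_indicator_le {α ι U : Type*} [NormedAddCommGroup U] {P : ι → Set α}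
    (hP : Pairwise (Function.onFun Disjoint P)) {I : Finset ι} {c : ι → U} {M : ℝ}
    (hc : ∀ i ∈ I, ‖c i‖ ≤ M) (hM : 0 ≤ M) (s : α) :
    ‖∑ i ∈ I, (P i).indicator (fun _ => c i) s‖ ≤ M := by
  by_cases h : ∃ j ∈ I, s ∈ P j
  · obtain ⟨j, hj, hs⟩ := h
    rw [sum_indicator_eq_of_mem hP hj hs]
    exact hc j hj
  · push Not at h
    rw [Finset.sum_eq_zero fun i hi => indicator_of_notMem (h i hi) _, norm_zero]
    exact hM

theorem pairwise_disjoint_Ioc_natCast_mul {ℓ : ℝ} (hℓ : 0 ≤ ℓ) :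
    Pairwise (Function.onFun Disjoint fun j : ℕ => Ioc (j * ℓ) ((j + 1) * ℓ)) := by
  have hmono : Monotone fun j : ℕ => (j : ℝ) * ℓ := fun i j h =>
    mul_le_mul_of_nonneg_right (Nat.cast_le.mpr h) hℓ
  simpa [Order.succ_eq_add_one] using hmono.pairwise_disjoint_on_Ioc_succ

section StepControl

variable {U : Type*} [NormedAddCommGroup U]

noncomputable def stepControl (u : ℝ → U) (τ : ℕ → ℝ) (ℓ : ℝ) (n : ℕ) : ℝ → U :=
  fun s => ∑ j ∈ Finset.range n, (Ioc (j * ℓ) ((j + 1) * ℓ)).indicator (fun _ => u (τ j)) s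

theorem isStepFun_stepControl (u : ℝ → U) (τ : ℕ → ℝ) (ℓ : ℝ) (n : ℕ) :
    IsStepFun (stepControl u τ ℓ n) :=
  ⟨n, _, _, _, rfl⟩

variable {u : ℝ → U} {τ : ℕ → ℝ} {ℓ : ℝ} {n : ℕ}

theorem stepControl_of_mem (hℓ : 0 ≤ ℓ) {j : ℕ} (hj : j < n) {s : ℝ}
    (hs : s ∈ Ioc (j * ℓ) ((j + 1) * ℓ)) : stepControl u τ ℓ n s = u (τ j) :=
  sum_indicator_eq_of_mem (pairwise_disjoint_Ioc_natCast_mul hℓ) (Finset.mem_range.mpr hj) hs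

theorem stepControl_of_lt (hℓ : 0 ≤ ℓ) {s : ℝ} (hs : n * ℓ < s) : stepControl u τ ℓ n s = 0 :=
  Finset.sum_eq_zero fun j hj => indicator_of_notMem (fun hsj => by
    have : ((j : ℝ) + 1) * ℓ ≤ n * ℓ := by
      gcongr; exact_mod_cast Nat.succ_le_of_lt (Finset.mem_range.mp hj)
    linarith [hsj.2]) _

theorem norm_stepControl_le (hℓ : 0 ≤ ℓ) {M : ℝ} (hu : ∀ s, ‖u s‖ ≤ M) (s : ℝ) :
    ‖stepControl u τ ℓ n s‖ ≤ M :=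
  norm_sum_indicator_le (pairwise_disjoint_Ioc_natCast_mul hℓ) (fun _ _ => hu _)
    ((norm_nonneg _).trans (hu 0)) s

end StepControl

namespace IsContractionSemigroup

variable {U E : Type*} [NormedAddCommGroup U] [NormedSpace ℝ U] [NormedAddCommGroup E]
  [NormedSpace ℝ E] {S : ℝ → E →L[ℝ] E}

/-- The tags `τ j` lie in the piece after the `j`-th one, so that `S (τ j - s)` is a forward
evolution on the `j`-th piece; the last piece carries no control. -/
theorem integral_norm_stepControl_sub_le (hS : IsContractionSemigroup S) (R : U →L[ℝ] E)
    {u : ℝ → U} {G φ : ℝ → E} {τ : ℕ → ℝ} {n : ℕ} {M t ℓ β δ : ℝ} (hu : ∀ s, ‖u s‖ ≤ M)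
    (hℓ : 0 < ℓ) (htℓ : t = (n + 1) * ℓ) (hG : IntervalIntegrable G volume 0 t)
    (hGS : ∀ s ∈ Ioc 0 t, ‖S (t - s) (R (u s)) - G s‖ ≤ β) (hφ : Continuous φ)
    (hφS : ∀ r ∈ Icc 0 t, ∀ s ∈ Icc 0 t, s ≤ r → r - s < 2 * ℓ → ‖S (r - s) (φ r) - φ s‖ ≤ δ)
    (hτ : ∀ j < n, τ j ∈ Ioc ((j + 1) * ℓ) ((j + 2) * ℓ))
    (hτφ : ∀ j < n, ℓ * ‖G (τ j) - φ (τ j)‖ ≤ ∫ s in (j + 1) * ℓ..(j + 2) * ℓ, ‖G s - φ s‖) :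
    ∫ s in 0..t, ‖S (t - s) (R (stepControl u τ ℓ n s)) - G s‖ ≤
      n * ℓ * (β + δ) + ℓ * (β + ‖R‖ * M) + 2 * ∫ s in 0..t, ‖G s - φ s‖ := by
  have hF := (isStepFun_stepControl u τ ℓ n).intervalIntegrable_apply hS.continuous_apply R t 0 t
  have hpiece : ∀ j < n, ∀ s ∈ Ioo (j * ℓ) ((j + 1) * ℓ),
      ‖S (t - s) (R (stepControl u τ ℓ n s)) - G s‖ ≤
        (β + δ) + ‖G (τ j) - φ (τ j)‖ + ‖G s - φ s‖ := by
    intro j hj s hs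
    have hj' : (j : ℝ) + 2 ≤ n + 1 := by exact_mod_cast (by omega : j + 2 ≤ n + 1)
    have hτt : τ j ≤ t := (hτ j hj).2.trans (by rw [htℓ]; gcongr)
    have hsτ : s ≤ τ j := by linarith [hs.2, (hτ j hj).1]
    have hs0 : 0 < s := lt_of_le_of_lt (by positivity) hs.1
    have hτ0 : 0 < τ j := by linarith
    have := hS.norm_apply_sub_le_of_le hsτ hτt (hGS (τ j) ⟨hτ0, hτt⟩)
      (hφS (τ j) ⟨hτ0.le, hτt⟩ s ⟨hs0.le, by linarith⟩ hsτ (by linarith [hs.1, (hτ j hj).2]))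
    rw [stepControl_of_mem hℓ.le hj (Ioo_subset_Ioc_self hs)]
    linarith
  have hlast : ∀ s ∈ Ioo (n * ℓ) t, ‖S (t - s) (R (stepControl u τ ℓ n s)) - G s‖ ≤
      β + ‖R‖ * M := by
    intro s hs
    have hs' : s ∈ Ioc 0 t := ⟨lt_of_le_of_lt (by positivity) hs.1, hs.2.le⟩
    rw [stepControl_of_lt hℓ.le hs.1, _root_.map_zero, _root_.map_zero, zero_sub, norm_neg]
    calc ‖G s‖ ≤ ‖S (t - s) (R (u s)) - G s‖ + ‖S (t - s) (R (u s))‖ := by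
          rw [norm_sub_rev]; exact norm_le_norm_sub_add _ _
      _ ≤ β + ‖R‖ * M := add_le_add (hGS s hs') ((hS.norm_apply_le (by linarith [hs'.2]) _).trans
          ((R.le_opNorm _).trans (by gcongr; exact hu s)))
  exact intervalIntegral_le_of_partition hℓ htℓ (hF.sub hG).norm
    (hG.sub (hφ.intervalIntegrable 0 t)).norm (fun s => norm_nonneg _) hpiece hτφ hlast

theorem exists_stepFun_integral_approx (hS : IsContractionSemigroup S) (R : U →L[ℝ] E)
    {u : ℝ → U} {G : ℝ → E} {M t β ρ : ℝ} (hu : ∀ s, ‖u s‖ ≤ M) (ht : 0 < t) (hρ : 0 < ρ)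
    (hG : IntervalIntegrable G volume 0 t)
    (hGS : ∀ s ∈ Ioc 0 t, ‖S (t - s) (R (u s)) - G s‖ ≤ β) :
    ∃ w : ℝ → U, IsStepFun w ∧ (∀ s, ‖w s‖ ≤ M) ∧ (∀ s, t < s → w s = 0) ∧
      ‖(∫ s in 0..t, S (t - s) (R (w s))) - ∫ s in 0..t, G s‖ ≤ t * β + ρ := by
  obtain ⟨φ, hφ, hφG⟩ :=
    exists_continuous_intervalIntegral_norm_sub_le ht.le hG (by positivity : 0 < ρ / 4)
  obtain ⟨m, hm, hmφ⟩ := hS.exists_norm_apply_sub_lt hφ t (by positivity : 0 < ρ / (4 * t))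
  have hM : 0 ≤ M := (norm_nonneg _).trans (hu 0)
  -- the budget `ρ` is spent as `2 · ρ/4` on `G ≈ φ`, `t · ρ/(4t)` on the modulus of
  -- `(σ, r) ↦ S σ (φ r)`, and `ρ/4` on the uncontrolled last piece
  set η := min (m / 2) (ρ / (4 * (‖R‖ * M + 1)))
  have hη : 0 < η := lt_min (by positivity) (by positivity)
  obtain ⟨n, hn⟩ := exists_nat_gt (t / η)
  set ℓ := t / (n + 1)
  have hℓ : 0 < ℓ := by positivity
  have htℓ : t = (n + 1) * ℓ := by simp only [ℓ]; field_simp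
  have hℓη : ℓ < η :=
    (div_lt_iff₀ (by positivity)).2 (by rw [div_lt_iff₀ hη] at hn; linarith)
  have hℓm : 2 * ℓ < m := by linarith [min_le_left (m / 2) (ρ / (4 * (‖R‖ * M + 1)))]
  have hℓR : ℓ * (‖R‖ * M) ≤ ρ / 4 := by
    have h := hℓη.le.trans (min_le_right (m / 2) (ρ / (4 * (‖R‖ * M + 1))))
    rw [le_div_iff₀ (by positivity)] at h
    nlinarith
  choose! τ hτ hτφ using fun j (hj : j < n) => exists_mul_le_integral_next_piece hℓ
    (htℓ ▸ (hG.sub (hφ.intervalIntegrable 0 t)).norm) hj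
  refine ⟨stepControl u τ ℓ n, isStepFun_stepControl u τ ℓ n, norm_stepControl_le hℓ.le hu,
    fun s hs => stepControl_of_lt hℓ.le (by linarith), ?_⟩
  have hL1 := hS.integral_norm_stepControl_sub_le R hu hℓ htℓ hG hGS hφ
    (fun r hr s hs hsr hrs => (hmφ r hr s hs hsr (hrs.trans hℓm)).le) hτ hτφ
  have hF := (isStepFun_stepControl u τ ℓ n).intervalIntegrable_apply hS.continuous_apply R t 0 t
  have hnℓ : n * ℓ * (ρ / (4 * t)) ≤ ρ / 4 := by
    calc n * ℓ * (ρ / (4 * t)) ≤ t * (ρ / (4 * t)) := by gcongr; linarith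
      _ = ρ / 4 := by field_simp
  have htβ : n * ℓ * β + ℓ * β = t * β := by rw [htℓ]; ring
  rw [← integral_sub hF hG]
  linarith [norm_integral_le_integral_norm (μ := volume) (f := fun s =>
    S (t - s) (R (stepControl u τ ℓ n s)) - G s) ht.le]

end IsContractionSemigroup

section MildSolution

variable {U E : Type*} [NormedAddCommGroup U] [NormedSpace ℝ U] [NormedAddCommGroup E]
  [NormedSpace ℝ E]

noncomputable def mildSol (Q : ℝ → E →L[ℝ] E) (R : U →L[ℝ] E) (y₀ : E) (u : ℝ → U) (t : ℝ) :
    E :=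
  Q t y₀ + ∫ s in 0..t, Q (t - s) (R (u s))

def reachTimes (Q : ℝ → E →L[ℝ] E) (R : U →L[ℝ] E) (y₀ : E) (M K : ℝ) : Set ℝ :=
  {t | 0 < t ∧ ∃ u : ℝ → U, (∀ s, ‖u s‖ ≤ M) ∧ ‖mildSol Q R y₀ u t‖ ≤ K}

theorem bddBelow_reachTimes (Q : ℝ → E →L[ℝ] E) (R : U →L[ℝ] E) (y₀ : E) (M K : ℝ) :
    BddBelow (reachTimes Q R y₀ M K) :=
  ⟨0, fun _ ht => ht.1.le⟩

theorem mem_reachTimes_of_decay (S : ℝ → E →L[ℝ] E) (R : U →L[ℝ] E) (y₀ : E) {M K δ : ℝ}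
    (hM : 0 ≤ M) (hK : 0 < K) (hδ : 0 < δ)
    (hdecay : ∀ t, 0 ≤ t → ‖S t‖ ≤ Real.exp (-δ * t)) :
    ‖y₀‖ / (K * δ) + 1 ∈ reachTimes S R y₀ M K := by
  set T := ‖y₀‖ / (K * δ) + 1
  refine ⟨by positivity, 0, fun _ => by simpa using hM, ?_⟩
  simp only [mildSol, Pi.zero_apply, _root_.map_zero, intervalIntegral.integral_zero, add_zero]
  calc ‖S T y₀‖ ≤ Real.exp (-δ * T) * ‖y₀‖ := (S T).le_of_opNorm_le (hdecay T (by positivity)) y₀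
    _ ≤ Real.exp (-(‖y₀‖ / K)) * ‖y₀‖ := by
        gcongr
        simp only [T]; field_simp; nlinarith
    _ ≤ K := by
        rw [Real.exp_neg, inv_mul_le_iff₀ (Real.exp_pos _)]
        exact (div_le_iff₀ hK).1 (by linarith [Real.add_one_le_exp (‖y₀‖ / K)])

/-- Where the integrand is not integrable the Bochner integral is `0`, which the zero control
also produces. -/
theorem exists_control_intervalIntegrable (Q : ℝ → E →L[ℝ] E) (R : U →L[ℝ] E) (t : ℝ)
    {u : ℝ → U} {M : ℝ} (hu : ∀ s, ‖u s‖ ≤ M) :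
    ∃ v : ℝ → U, (∀ s, ‖v s‖ ≤ M) ∧
      IntervalIntegrable (fun s => Q (t - s) (R (v s))) volume 0 t ∧
      ∫ s in 0..t, Q (t - s) (R (v s)) = ∫ s in 0..t, Q (t - s) (R (u s)) := by
  by_cases h : IntervalIntegrable (fun s => Q (t - s) (R (u s))) volume 0 t
  · exact ⟨u, hu, h, rfl⟩
  · refine ⟨0, fun s => ?_, by simp, by simp [integral_undef h]⟩
    simpa using (norm_nonneg _).trans (hu s)

theorem norm_mildSol_sub_le {Q₁ Q₂ : ℝ → E →L[ℝ] E} (hQ₁ : ∀ x, Continuous fun τ => Q₁ τ x)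
    (hQ₂ : ∀ x, Continuous fun τ => Q₂ τ x) (R : U →L[ℝ] E) (y₀ : E) {w : ℝ → U}
    (hw : IsStepFun w) {M κ t : ℝ} (hwM : ∀ s, ‖w s‖ ≤ M) (hκ : 0 ≤ κ) (ht : 0 ≤ t)
    (hQ : ∀ τ ∈ Icc 0 t, ∀ x, ‖Q₁ τ x - Q₂ τ x‖ ≤ κ * ‖x‖) :
    ‖mildSol Q₁ R y₀ w t - mildSol Q₂ R y₀ w t‖ ≤ κ * ‖y₀‖ + t * (κ * (‖R‖ * M)) := by
  have hpt : ∀ s ∈ uIoc 0 t, ‖Q₁ (t - s) (R (w s)) - Q₂ (t - s) (R (w s))‖ ≤ κ * (‖R‖ * M) :=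
    fun s hs => by
      rw [uIoc_of_le ht] at hs
      refine (hQ (t - s) ⟨by linarith [hs.2], by linarith [hs.1]⟩ _).trans ?_
      gcongr
      exact (R.le_opNorm _).trans (by gcongr; exact hwM s)
  have hy := hQ t ⟨ht, le_rfl⟩ y₀
  have hI := norm_integral_le_of_norm_le_const hpt
  rw [sub_zero, abs_of_nonneg ht, integral_sub (hw.intervalIntegrable_apply hQ₁ R t 0 t)
    (hw.intervalIntegrable_apply hQ₂ R t 0 t)] at hI
  calc ‖mildSol Q₁ R y₀ w t - mildSol Q₂ R y₀ w t‖
      = ‖(Q₁ t y₀ - Q₂ t y₀) + ((∫ s in 0..t, Q₁ (t - s) (R (w s))) -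
          ∫ s in 0..t, Q₂ (t - s) (R (w s)))‖ := by rw [mildSol, mildSol]; abel_nf
    _ ≤ κ * ‖y₀‖ + t * (κ * (‖R‖ * M)) := (norm_add_le _ _).trans (by linarith)

theorem IsContractionSemigroup.mildSol_add [CompleteSpace E] {S : ℝ → E →L[ℝ] E}
    (hS : IsContractionSemigroup S) (R : U →L[ℝ] E) (y₀ : E) {w : ℝ → U} (hw : IsStepFun w)
    {t h : ℝ} (hw0 : ∀ s, t < s → w s = 0) (ht : 0 ≤ t) (hh : 0 ≤ h) :
    mildSol S R y₀ w (t + h) = S h (mildSol S R y₀ w t) := by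
  have hint := hw.intervalIntegrable_apply hS.continuous_apply R t
  have hshift : ∀ s, S (t + h - s) (R (w s)) = S h (S (t - s) (R (w s))) := fun s => by
    rcases le_or_gt s t with hst | hst
    · rw [← hS.apply_add hh (sub_nonneg.2 hst)]; ring_nf
    · simp [hw0 s hst]
  have htail : ∫ s in t..t + h, S (t - s) (R (w s)) = 0 := by
    rw [intervalIntegral.integral_congr_ae (g := fun _ => (0 : E)) (Eventually.of_forall
      fun s hs => by rw [uIoc_of_le (by linarith)] at hs; simp [hw0 s hs.1]),
      intervalIntegral.integral_zero]
  simp only [mildSol, hshift, map_add]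
  rw [(S h).intervalIntegral_comp_comm (hint 0 (t + h)),
    ← integral_add_adjacent_intervals (hint 0 t) (hint t (t + h)), htail, add_zero,
    add_comm t h, hS.apply_add hh ht]

end MildSolution

namespace IsContractionSemigroup

variable {U E : Type*} [NormedAddCommGroup U] [NormedSpace ℝ U] [NormedAddCommGroup E]
  [NormedSpace ℝ E] [CompleteSpace E] {S : ℝ → E →L[ℝ] E}

theorem add_mem_reachTimes (hS : IsContractionSemigroup S) {Q₁ Q₂ : ℝ → E →L[ℝ] E}
    (hQ₂c : ∀ x, Continuous fun τ => Q₂ τ x) (R : U →L[ℝ] E) {y₀ : E} {M K T κ t h : ℝ}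
    (hκ : 0 ≤ κ) (hQ₁ : ∀ τ ∈ Icc 0 T, ∀ x, ‖Q₁ τ x - S τ x‖ ≤ κ * ‖x‖)
    (hQ₂ : ∀ τ ∈ Icc 0 T, ∀ x, ‖Q₂ τ x - S τ x‖ ≤ κ * ‖x‖) (hh : 0 ≤ h)
    (hκK : 2 * κ * (‖y₀‖ + T * (‖R‖ * M)) < (1 - ‖S h‖) * K)
    (ht : t ∈ reachTimes Q₁ R y₀ M K) (htT : t + h ≤ T) : t + h ∈ reachTimes Q₂ R y₀ M K := by
  obtain ⟨ht0, u, hu, hK⟩ := ht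
  obtain ⟨v, hv, hGint, hGeq⟩ := exists_control_intervalIntegrable Q₁ R t hu
  set B := κ * (‖R‖ * M)
  set ρ := (1 - ‖S h‖) * K - 2 * κ * (‖y₀‖ + T * (‖R‖ * M))
  have hρ : 0 < ρ := sub_pos.2 hκK
  have hGS : ∀ s ∈ Ioc 0 t, ‖S (t - s) (R (v s)) - Q₁ (t - s) (R (v s))‖ ≤ B := fun s hs => by
    rw [norm_sub_rev]
    exact (hQ₁ (t - s) ⟨by linarith [hs.2], by linarith [hs.1]⟩ _).trans
      (mul_le_mul_of_nonneg_left ((R.le_opNorm _).trans (by gcongr; exact hv s)) hκ)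
  obtain ⟨w, hw, hwM, hw0, happrox⟩ := hS.exists_stepFun_integral_approx R hv ht0 hρ hGint hGS
  refine ⟨by linarith, w, hwM, ?_⟩
  have hSt : ‖mildSol S R y₀ w t‖ ≤ K + κ * ‖y₀‖ + t * B + ρ := by
    have hy := hQ₁ t ⟨ht0.le, by linarith⟩ y₀
    rw [norm_sub_rev] at hy
    have hK' : ‖mildSol Q₁ R y₀ v t‖ ≤ K := by rwa [mildSol, hGeq]
    calc ‖mildSol S R y₀ w t‖ = ‖mildSol Q₁ R y₀ v t + (S t y₀ - Q₁ t y₀) +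
          ((∫ s in 0..t, S (t - s) (R (w s))) - ∫ s in 0..t, Q₁ (t - s) (R (v s)))‖ := by
          rw [mildSol, mildSol]; abel_nf
      _ ≤ K + κ * ‖y₀‖ + t * B + ρ := norm_add₃_le.trans (by linarith)
  have hcmp := norm_mildSol_sub_le hQ₂c hS.continuous_apply R y₀ hw hwM hκ (by linarith)
    fun τ hτ x => hQ₂ τ ⟨hτ.1, hτ.2.trans htT⟩ x
  rw [hS.mildSol_add R y₀ hw hw0 ht0.le hh] at hcmp
  have hB : 0 ≤ B := mul_nonneg hκ (mul_nonneg (norm_nonneg _) ((norm_nonneg _).trans (hu 0)))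
  have hdamp := mul_le_of_le_one_left
    (add_nonneg (add_nonneg (mul_nonneg hκ (norm_nonneg y₀)) (mul_nonneg ht0.le hB)) hρ.le)
    (hS.norm_le_one h hh)
  have hT : (2 * t + h) * B ≤ 2 * T * B := by gcongr; linarith
  calc ‖mildSol Q₂ R y₀ w (t + h)‖
      ≤ ‖mildSol Q₂ R y₀ w (t + h) - S h (mildSol S R y₀ w t)‖ + ‖S h (mildSol S R y₀ w t)‖ :=
        norm_le_norm_sub_add _ _
    _ ≤ (κ * ‖y₀‖ + (t + h) * B) + ‖S h‖ * (K + κ * ‖y₀‖ + t * B + ρ) :=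
        add_le_add hcmp ((S h).le_opNorm _ |>.trans (by gcongr))
    _ ≤ K := by linarith

theorem abs_sInf_reachTimes_sub_le (hS : IsContractionSemigroup S) {Q : ℝ → E →L[ℝ] E}
    (hQc : ∀ x, Continuous fun τ => Q τ x) (R : U →L[ℝ] E) {y₀ : E} {M K T₀ T κ h : ℝ}
    (hT₀ : T₀ ∈ reachTimes S R y₀ M K) (hκ : 0 ≤ κ)
    (hQ : ∀ τ ∈ Icc 0 T, ∀ x, ‖Q τ x - S τ x‖ ≤ κ * ‖x‖) (hh : 0 < h) (hT : T₀ + 3 * h ≤ T)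
    (hκK : 2 * κ * (‖y₀‖ + T * (‖R‖ * M)) < (1 - ‖S h‖) * K) :
    |sInf (reachTimes Q R y₀ M K) - sInf (reachTimes S R y₀ M K)| ≤ h := by
  have hself : ∀ τ ∈ Icc 0 T, ∀ x, ‖S τ x - S τ x‖ ≤ κ * ‖x‖ := fun τ _ x => by
    rw [sub_self, norm_zero]; positivity
  have hSQ : ∀ t ∈ reachTimes S R y₀ M K, t + h ≤ T → t + h ∈ reachTimes Q R y₀ M K :=
    fun t ht htT => hS.add_mem_reachTimes hQc R hκ hself hQ hh.le hκK ht htT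
  have hQS : ∀ t ∈ reachTimes Q R y₀ M K, t + h ≤ T → t + h ∈ reachTimes S R y₀ M K :=
    fun t ht htT => hS.add_mem_reachTimes hS.continuous_apply R hκ hQ hself hh.le hκK ht htT
  have hS_le := csInf_le (bddBelow_reachTimes S R y₀ M K) hT₀
  have hup := csInf_le_csInf_add ⟨T₀, hT₀⟩ (bddBelow_reachTimes Q R y₀ M K)
    (a := T₀ + h) (by linarith) fun t ht hta => hSQ t ht (by linarith)
  have hdown := csInf_le_csInf_add ⟨T₀ + h, hSQ T₀ hT₀ (by linarith)⟩
    (bddBelow_reachTimes S R y₀ M K) (a := T₀ + 2 * h) (by linarith)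
    fun t ht hta => hQS t ht (by linarith)
  exact abs_sub_le_iff.2 ⟨by linarith, by linarith⟩

end IsContractionSemigroup

/-- `S` and `Seps ε` are the semigroups of the two heat equations, related by the Duhamel
formula with the multiplication operators `A`, `Aeps ε`; `‖Aeps ε - A‖ → 0` encodes
`‖a_ε - a‖_∞ → 0`, `R` is `χ_ω`, and the decay bound on `S` encodes `‖a‖_∞ < λ₁` or `a ≤ 0`. -/
theorem stmt8_general {H : Type*} [NormedAddCommGroup H] [InnerProductSpace ℝ H] [CompleteSpace H]
    (K M delta0 : ℝ) (hK : 0 < K) (hM : 0 < M) (hdelta0 : 0 < delta0)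
    (S : ℝ → H →L[ℝ] H) (Seps : ℝ → ℝ → H →L[ℝ] H)
    (A : H →L[ℝ] H) (Aeps : ℝ → H →L[ℝ] H) (R : H →L[ℝ] H) (y0 : H)
    (hS0 : S 0 = ContinuousLinearMap.id ℝ H)
    (hsemi : ∀ s t : ℝ, 0 ≤ s → 0 ≤ t → S (s + t) = (S s).comp (S t))
    (hScont : ∀ x : H, Continuous fun t => S t x)
    (hSepscont : ∀ ε : ℝ, 0 < ε → ∀ x : H, Continuous fun t => Seps ε t x)
    (hdecay : ∀ t : ℝ, 0 ≤ t → ‖S t‖ ≤ Real.exp (-delta0 * t))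
    (hAconv : Tendsto (fun ε => ‖Aeps ε - A‖) (𝓝[>] (0:ℝ)) (𝓝 0))
    (hpert : ∀ ε : ℝ, 0 < ε → ∀ t : ℝ, 0 ≤ t → ∀ x : H,
      Seps ε t x = S t x + ∫ s in (0:ℝ)..t, S (t - s) ((Aeps ε - A) (Seps ε s x)))
    (ysol : (ℝ → H) → ℝ → H) (ysoleps : ℝ → (ℝ → H) → ℝ → H)
    (hysol : ∀ (u : ℝ → H) (t : ℝ),
      ysol u t = S t y0 + ∫ s in (0:ℝ)..t, S (t - s) (R (u s)))
    (hysoleps : ∀ (ε : ℝ) (u : ℝ → H) (t : ℝ),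
      ysoleps ε u t = Seps ε t y0 + ∫ s in (0:ℝ)..t, Seps ε (t - s) (R (u s))) :
    Tendsto
      (fun ε => sInf {t : ℝ | 0 < t ∧ ∃ u : ℝ → H,
        (∀ s : ℝ, ‖u s‖ ≤ M) ∧ ‖ysoleps ε u t‖ ≤ K})
      (𝓝[>] (0:ℝ))
      (𝓝 (sInf {t : ℝ | 0 < t ∧ ∃ u : ℝ → H,
        (∀ s : ℝ, ‖u s‖ ≤ M) ∧ ‖ysol u t‖ ≤ K})) := by
  have hS : IsContractionSemigroup S := ⟨hS0, hsemi, hScont, fun τ hτ =>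
    (hdecay τ hτ).trans (Real.exp_le_one_iff.2 (by nlinarith))⟩
  simp only [hysol, hysoleps]
  change Tendsto (fun ε => sInf (reachTimes (Seps ε) R y0 M K)) (𝓝[>] 0)
    (𝓝 (sInf (reachTimes S R y0 M K)))
  have hT₀ := mem_reachTimes_of_decay S R y0 hM.le hK hdelta0 hdecay
  set T := ‖y0‖ / (K * delta0) + 1 + 2 with hTdef
  have hT : 0 ≤ T := by rw [hTdef]; positivity
  have hsmall : ∀ a b : ℝ, 0 < b → ∀ᶠ ε in 𝓝[>] (0 : ℝ), a * ‖Aeps ε - A‖ < b := fun a b hb =>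
    (hAconv.const_mul a).eventually (gt_mem_nhds (by simpa using hb))
  rw [Metric.tendsto_nhds]
  intro r hr
  set h := min (r / 2) (1 / 2)
  have hh : 0 < h := lt_min (by positivity) (by norm_num)
  have hSh : ‖S h‖ < 1 := (hdecay h hh.le).trans_lt (Real.exp_lt_one_iff.2 (by nlinarith))
  filter_upwards [hsmall T (1 / 2) (by norm_num), hsmall (4 * T * (‖y0‖ + T * (‖R‖ * M)))
    ((1 - ‖S h‖) * K) (by nlinarith), self_mem_nhdsWithin] with ε hDT hκK hε
  have hclose := fun τ (hτ : τ ∈ Icc 0 T) x =>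
    norm_sub_le_of_duhamel hS.norm_le_one (hSepscont ε hε) (hpert ε hε) (by linarith) hτ x
  have := hS.abs_sInf_reachTimes_sub_le (hSepscont ε hε) R hT₀ (mul_nonneg (by positivity) hT)
    hclose hh (by linarith [min_le_right (r / 2) (1 / 2)]) (by linarith)
  rw [Real.dist_eq]
  linarith [min_le_left (r / 2) (1 / 2)]

/-- Convergence of optimal times: Model the heat equations
`y_t - Δy - ay = χ_ω u` and `y_t - Δy - a_ε y = χ_ω u` via the semigroups
`S`, `S^ε` (Duhamel perturbation formula with bounded multiplication operators
`A`, `A_ε`, where `‖A_ε - A‖ → 0` encodes `‖a_ε - a‖_∞ → 0`), the control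
operator `R = χ_ω`, and mild solutions `ysol u t = S t y₀ + ∫₀ᵗ S(t-s) R(u s) ds`
(similarly `ysoleps`).  Assume the decay `‖S t‖ ≤ e^{-δ₀ t}` (from `‖a‖_∞ < λ₁`
or `a ≤ 0`), `‖y₀‖ > K` and `M > 0`.  Then the optimal times satisfy
`T^{*,1}_ε → T^*` as `ε → 0⁺`. -/
theorem stmt8 {H : Type*} [NormedAddCommGroup H] [InnerProductSpace ℝ H] [CompleteSpace H]
    (K M delta0 : ℝ) (hK : 0 < K) (hM : 0 < M) (hdelta0 : 0 < delta0)
    (S : ℝ → H →L[ℝ] H) (Seps : ℝ → ℝ → H →L[ℝ] H)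
    (A : H →L[ℝ] H) (Aeps : ℝ → H →L[ℝ] H) (R : H →L[ℝ] H) (y0 : H)
    (hy0 : K < ‖y0‖)
    (hS0 : S 0 = ContinuousLinearMap.id ℝ H)
    (hsemi : ∀ s t : ℝ, 0 ≤ s → 0 ≤ t → S (s + t) = (S s).comp (S t))
    (hScont : ∀ x : H, Continuous fun t => S t x)
    (hSepscont : ∀ ε : ℝ, 0 < ε → ∀ x : H, Continuous fun t => Seps ε t x)
    (hdecay : ∀ t : ℝ, 0 ≤ t → ‖S t‖ ≤ Real.exp (-delta0 * t))
    (hAconv : Tendsto (fun ε => ‖Aeps ε - A‖) (𝓝[>] (0:ℝ)) (𝓝 0))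
    (hpert : ∀ ε : ℝ, 0 < ε → ∀ t : ℝ, 0 ≤ t → ∀ x : H,
      Seps ε t x = S t x + ∫ s in (0:ℝ)..t, S (t - s) ((Aeps ε - A) (Seps ε s x)))
    (ysol : (ℝ → H) → ℝ → H) (ysoleps : ℝ → (ℝ → H) → ℝ → H)
    (hysol : ∀ (u : ℝ → H) (t : ℝ),
      ysol u t = S t y0 + ∫ s in (0:ℝ)..t, S (t - s) (R (u s)))
    (hysoleps : ∀ (ε : ℝ) (u : ℝ → H) (t : ℝ),
      ysoleps ε u t = Seps ε t y0 + ∫ s in (0:ℝ)..t, Seps ε (t - s) (R (u s))) :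
    Tendsto
      (fun ε => sInf {t : ℝ | 0 < t ∧ ∃ u : ℝ → H,
        (∀ s : ℝ, ‖u s‖ ≤ M) ∧ ‖ysoleps ε u t‖ ≤ K})
      (𝓝[>] (0:ℝ))
      (𝓝 (sInf {t : ℝ | 0 < t ∧ ∃ u : ℝ → H,
        (∀ s : ℝ, ‖u s‖ ≤ M) ∧ ‖ysol u t‖ ≤ K})) :=
  stmt8_general K M delta0 hK hM hdelta0 S Seps A Aeps R y0 hS0 hsemi hScont hSepscont hdecay hAconv
    hpert ysol ysoleps hysol hysoleps
end
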